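/- Let q ≥ 1, let {A_s}_{s∈S} be a finite family of real q×q matrices, and let F := (1/2)·∑_{s∈S} A_s ⊗ A_s, where ⊗ denotes the Kronecker product; assume F is invertible. Let δ := vec(W) for some symmetric q×q real matrix W, and set I := F·N_q. Then for every real q²×q² matrix P satisfying the four Penrose conditions for I (namely I·P·I = I, P·I·P = P, and both I·P and P·I are symmetric), one has P·δ = F⁻¹·δ. In particular, the Fisher Scoring update step computed with the Moore–Penrose pseudoinverse of I = F·N_q applied to δ coincides with the update step F⁻¹·δ. -/

import Mathlib

open Matrix

/-- Column-major vectorization of a matrix. -/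
def vec {α β R : Type*} (A : Matrix α β R) : β × α → R := fun p => A p.2 p.1

/-- The commutation matrix `K_{q,q}`: the unique `q² × q²` matrix with
`K_{q,q} · vec A = vec Aᵀ` for every `q × q` matrix `A` (column-major `vec`). -/
def commMat (q : ℕ) : Matrix (Fin q × Fin q) (Fin q × Fin q) ℝ := fun a b =>
  if a.1 = b.2 ∧ a.2 = b.1 then 1 else 0

/-- The symmetrization matrix `N_q = (1/2)(I_{q²} + K_{q,q})`. -/
noncomputable def Nmat (q : ℕ) : Matrix (Fin q × Fin q) (Fin q × Fin q) ℝ :=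
  (1 / 2 : ℝ) • (1 + commMat q)

/-!
`F` commutes with `K_{q,q}`, because `K (A ⊗ B) = (B ⊗ A) K`; hence `F` and `F⁻¹` commute with
`N_q`. As `K` fixes `vec W`, `N_q` fixes `δ` and therefore `x := F⁻¹ δ`, so that `I x = δ` and
`x = Iᵀ (F⁻¹)ᵀ x` lies in the range of `Iᵀ`. The conditions `I P I = I` and `(P I)ᵀ = P I` give
`P I Iᵀ = Iᵀ`, i.e. `P I` is the identity on the range of `Iᵀ`, so `P δ = P I x = x`.
-/

open scoped Kronecker

theorem Matrix.mul_mul_transpose_eq_transpose_of_penrose {m n R : Type*} [Fintype m] [Fintype n]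
    [CommSemiring R] {M : Matrix m n R} {P : Matrix n m R} (h1 : M * P * M = M)
    (h4 : (P * M).IsSymm) : P * M * Mᵀ = Mᵀ := by
  conv_lhs => rw [← h4.eq, ← transpose_mul, ← Matrix.mul_assoc, h1]

theorem commMat_eq_toMatrix_prodComm (q : ℕ) :
    commMat q = (Equiv.prodComm (Fin q) (Fin q)).toPEquiv.toMatrix := by
  ext a b
  simp [commMat, PEquiv.toMatrix_apply, Prod.ext_iff, eq_comm, and_comm]

theorem commMat_mul {q : ℕ} {n : Type*} (M : Matrix (Fin q × Fin q) n ℝ) :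
    commMat q * M = M.submatrix Prod.swap id := by
  rw [commMat_eq_toMatrix_prodComm, PEquiv.toMatrix_toPEquiv_mul]
  rfl

theorem mul_commMat {q : ℕ} {m : Type*} [Fintype m] (M : Matrix m (Fin q × Fin q) ℝ) :
    M * commMat q = M.submatrix id Prod.swap := by
  rw [commMat_eq_toMatrix_prodComm, PEquiv.mul_toMatrix_toPEquiv]
  rfl

theorem commMat_mulVec {q : ℕ} (v : Fin q × Fin q → ℝ) :
    commMat q *ᵥ v = v ∘ Prod.swap := by
  rw [commMat_eq_toMatrix_prodComm, PEquiv.toMatrix_toPEquiv_mulVec]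
  rfl

theorem commMat_mulVec_vec {q : ℕ} (A : Matrix (Fin q) (Fin q) ℝ) :
    commMat q *ᵥ _root_.vec A = _root_.vec Aᵀ := by
  rw [commMat_mulVec]
  rfl

theorem transpose_commMat (q : ℕ) : (commMat q)ᵀ = commMat q := by
  rw [commMat_eq_toMatrix_prodComm, ← PEquiv.toMatrix_symm, ← Equiv.toPEquiv_symm,
    Equiv.prodComm_symm]

theorem commMat_mul_kronecker {q : ℕ} (A B : Matrix (Fin q) (Fin q) ℝ) :
    commMat q * (A ⊗ₖ B) = (B ⊗ₖ A) * commMat q := by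
  rw [commMat_mul, mul_commMat]
  ext a b
  simp [mul_comm]

theorem transpose_Nmat (q : ℕ) : (Nmat q)ᵀ = Nmat q := by
  rw [Nmat, transpose_smul, transpose_add, transpose_one, transpose_commMat]

theorem commute_Nmat_of_commute_commMat {q : ℕ} {M : Matrix (Fin q × Fin q) (Fin q × Fin q) ℝ}
    (h : Commute (commMat q) M) : Commute (Nmat q) M :=
  ((Commute.one_left M).add_left h).smul_left _

theorem Nmat_mulVec_vec_of_isSymm {q : ℕ} {W : Matrix (Fin q) (Fin q) ℝ} (hW : W.IsSymm) :
    Nmat q *ᵥ _root_.vec W = _root_.vec W := by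
  rw [Nmat, smul_mulVec, add_mulVec, one_mulVec, commMat_mulVec_vec, hW.eq, ← two_smul ℝ,
    smul_smul]
  norm_num

theorem stmt9 (q : ℕ) {S : Type*} [Fintype S]
    (A : S → Matrix (Fin q) (Fin q) ℝ)
    (F : Matrix (Fin q × Fin q) (Fin q × Fin q) ℝ)
    (hF : F = (1 / 2 : ℝ) • ∑ s, kroneckerMap (· * ·) (A s) (A s))
    (hFinv : IsUnit F.det)
    (W : Matrix (Fin q) (Fin q) ℝ) (hW : W.IsSymm)
    (δ : (Fin q × Fin q) → ℝ) (hδ : δ = _root_.vec W)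
    (I' : Matrix (Fin q × Fin q) (Fin q × Fin q) ℝ) (hI : I' = F * Nmat q)
    (P : Matrix (Fin q × Fin q) (Fin q × Fin q) ℝ)
    (hP1 : I' * P * I' = I')
    (hP4 : (P * I').IsSymm) :
    P.mulVec δ = F⁻¹.mulVec δ := by
  have hKF : Commute (commMat q) F := by
    rw [hF]
    exact (Commute.sum_right _ _ _ fun s _ => commMat_mul_kronecker (A s) (A s)).smul_right _
  have hNFinv : Commute (Nmat q) F⁻¹ := by
    obtain ⟨u, rfl⟩ := (isUnit_iff_isUnit_det F).mpr hFinv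
    rw [← coe_units_inv]
    exact (commute_Nmat_of_commute_commMat hKF).units_inv_right
  have hNδ : Nmat q *ᵥ δ = δ := hδ ▸ Nmat_mulVec_vec_of_isSymm hW
  set x := F⁻¹ *ᵥ δ
  have hNx : Nmat q *ᵥ x = x := by
    rw [mulVec_mulVec, hNFinv.eq, ← mulVec_mulVec, hNδ]
  have hIx : I' *ᵥ x = δ := by
    rw [hI, ← mulVec_mulVec, hNx, mulVec_mulVec, mul_nonsing_inv _ hFinv, one_mulVec]
  have hx : I'ᵀ *ᵥ F⁻¹ᵀ *ᵥ x = x := by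
    rw [hI, transpose_mul, transpose_Nmat, mulVec_mulVec, Matrix.mul_assoc, ← transpose_mul,
      nonsing_inv_mul _ hFinv, transpose_one, Matrix.mul_one, hNx]
  calc P *ᵥ δ = P *ᵥ I' *ᵥ I'ᵀ *ᵥ F⁻¹ᵀ *ᵥ x := by rw [hx, hIx]
    _ = x := by
      rw [mulVec_mulVec, mulVec_mulVec, mul_mul_transpose_eq_transpose_of_penrose hP1 hP4, hx]
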